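/- For positive semidefinite operators P, Q on C^n, the fidelity F(P,Q) = ‖√P √Q‖₁ equals the supremum of (1/2)Tr(X) + (1/2)Tr(X*) over all operators X on C^n for which the block operator [[P, X], [X*, Q]] is positive semidefinite. -/

import Mathlib

open Matrix Kronecker
open scoped ComplexOrder

/-- Trace norm `‖A‖₁ = Tr √(Aᴴ A)` of a complex matrix. -/
noncomputable def traceNorm {α β : Type*} [Fintype α] [Fintype β] [DecidableEq α] [DecidableEq β]
    (A : Matrix α β ℂ) : ℝ :=
  open scoped MatrixOrder in
  ((CFC.sqrt (Aᴴ * A)).trace).re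

/-- Spectral norm (operator norm w.r.t. Euclidean norms). -/
noncomputable def specNorm {α β : Type*} [Fintype α] [Fintype β] [DecidableEq α] [DecidableEq β]
    (A : Matrix α β ℂ) : ℝ :=
  ‖LinearMap.toContinuousLinearMap (Matrix.toEuclideanLin A)‖

/-- Frobenius norm. -/
noncomputable def frobNorm {α β : Type*} [Fintype α] [Fintype β]
    (A : Matrix α β ℂ) : ℝ :=
  Real.sqrt ((Aᴴ * A).trace.re)

/-- Positive semidefinite square root (junk value `0` off the PSD cone). -/
noncomputable def msqrt {α : Type*} [Fintype α] [DecidableEq α]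
    (P : Matrix α α ℂ) : Matrix α α ℂ :=
  open scoped Classical in
  open scoped MatrixOrder in
  if h : P.PosSemidef then CFC.sqrt P else 0

/-- Fidelity `F(P,Q) = ‖√P √Q‖₁`. -/
noncomputable def fid {α : Type*} [Fintype α] [DecidableEq α]
    (P Q : Matrix α α ℂ) : ℝ :=
  traceNorm (msqrt P * msqrt Q)

/-- Partial trace over the second (right) tensor factor. -/
noncomputable def ptraceRight {a b : ℕ} (M : Matrix (Fin a × Fin b) (Fin a × Fin b) ℂ) :
    Matrix (Fin a) (Fin a) ℂ :=
  Matrix.of fun i j => ∑ s : Fin b, M (i, s) (j, s)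

/-- Partial trace over the first (left) tensor factor. -/
noncomputable def ptraceLeft {a b : ℕ} (M : Matrix (Fin a × Fin b) (Fin a × Fin b) ℂ) :
    Matrix (Fin b) (Fin b) ℂ :=
  Matrix.of fun i j => ∑ s : Fin a, M (s, i) (s, j)

/-- `Φ ⊗ id` acting on `L(Cⁿ ⊗ Cᵏ)`. -/
noncomputable def tensorId {n m k : ℕ}
    (Φ : Matrix (Fin n) (Fin n) ℂ → Matrix (Fin m) (Fin m) ℂ)
    (M : Matrix (Fin n × Fin k) (Fin n × Fin k) ℂ) :
    Matrix (Fin m × Fin k) (Fin m × Fin k) ℂ :=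
  Matrix.of fun p q => Φ (Matrix.of fun a c => M (a, p.2) (c, q.2)) p.1 q.1

/-- Completely bounded trace norm `¦¦¦Φ¦¦¦₁ = ‖Φ ⊗ id_{L(Cⁿ)}‖₁`. -/
noncomputable def cbTraceNorm {n m : ℕ}
    (Φ : Matrix (Fin n) (Fin n) ℂ → Matrix (Fin m) (Fin m) ℂ) : ℝ :=
  sSup {c : ℝ | ∃ M : Matrix (Fin n × Fin n) (Fin n × Fin n) ℂ,
    traceNorm M ≤ 1 ∧ c = traceNorm (tensorId Φ M)}

/-- Completely bounded spectral norm of `Ψ : L(Cᵐ) → L(Cⁿ)`, with ancilla `Cⁿ`. -/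
noncomputable def cbSpecNorm {m n : ℕ}
    (Ψ : Matrix (Fin m) (Fin m) ℂ → Matrix (Fin n) (Fin n) ℂ) : ℝ :=
  sSup {c : ℝ | ∃ M : Matrix (Fin m × Fin n) (Fin m × Fin n) ℂ,
    specNorm M ≤ 1 ∧ c = specNorm (tensorId Ψ M)}

/-- Choi–Jamiołkowski representation `J(Φ) = ∑ᵢⱼ Φ(Eᵢⱼ) ⊗ Eᵢⱼ`. -/
noncomputable def choi {n m : ℕ}
    (Φ : Matrix (Fin n) (Fin n) ℂ → Matrix (Fin m) (Fin m) ℂ) :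
    Matrix (Fin m × Fin n) (Fin m × Fin n) ℂ :=
  ∑ i : Fin n, ∑ j : Fin n, (Φ (Matrix.single i j 1)) ⊗ₖ (Matrix.single i j 1)

/-- vec mapping. -/
def vecM {n : ℕ} (A : Matrix (Fin n) (Fin n) ℂ) : Fin n × Fin n → ℂ := fun p => A p.1 p.2

/-!
A feasible `X` is a Gram block: `X = Bᴴ C` with `Bᴴ B = P` and `Cᴴ C = Q`. Polar decomposition
gives `B = U √P` and `C = V √Q` with contractions `U`, `V`, so `Re Tr X = Re Tr (Vᴴ U √P √Q)`,
which is at most `‖√P √Q‖₁` by duality of the trace norm with the operator norm. Conversely, if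
`√P √Q = W |√P √Q|` with `W` a contraction that is isometric on the range of `|√P √Q|`, then
`X = √P W √Q` is feasible and `Tr X = ‖√P √Q‖₁`, so the supremum is attained. The polar factor
is `A |A|⁺`, with the pseudo-inverse `|A|⁺` given by the functional calculus of `x ↦ x⁻¹`
(where `0⁻¹ = 0`).
-/

namespace Matrix

variable {k l m n : Type*} [Fintype k] [Fintype l] [Fintype m] [Fintype n]

def IsContraction [DecidableEq n] (K : Matrix m n ℂ) : Prop := (1 - Kᴴ * K).PosSemidef

theorem IsContraction.mul [DecidableEq m] [DecidableEq n] {K : Matrix k m ℂ} {L : Matrix m n ℂ}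
    (hK : K.IsContraction) (hL : L.IsContraction) : (K * L).IsContraction := by
  have h : 1 - (K * L)ᴴ * (K * L) = (1 - Lᴴ * L) + Lᴴ * (1 - Kᴴ * K) * L := by
    simp only [conjTranspose_mul, Matrix.mul_sub, Matrix.sub_mul, Matrix.mul_one, Matrix.mul_assoc]
    abel
  rw [IsContraction, h]
  exact hL.add (hK.conjTranspose_mul_mul_same L)

theorem PosSemidef.re_trace_nonneg {A : Matrix n n ℂ} (hA : A.PosSemidef) : 0 ≤ A.trace.re := by
  simpa using Complex.re_le_re hA.trace_nonneg

theorem two_mul_re_trace_conjTranspose_mul_le (Y Z : Matrix m n ℂ) :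
    2 * (Yᴴ * Z).trace.re ≤ (Yᴴ * Y).trace.re + (Zᴴ * Z).trace.re := by
  have h := (posSemidef_conjTranspose_mul_self (Y - Z)).re_trace_nonneg
  have hZY : (Zᴴ * Y).trace.re = (Yᴴ * Z).trace.re := by
    rw [← conjTranspose_conjTranspose Y, ← conjTranspose_mul, trace_conjTranspose,
      conjTranspose_conjTranspose, Complex.star_def, Complex.conj_re]
  simp only [conjTranspose_sub, Matrix.sub_mul, Matrix.mul_sub, trace_sub, Complex.sub_re] at h
  linarith

theorem IsContraction.re_trace_conjTranspose_mul_self_le [DecidableEq n] {F : Matrix k n ℂ} (hF : F.IsContraction)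
    (r : Matrix m n ℂ) : ((F * rᴴ)ᴴ * (F * rᴴ)).trace.re ≤ (r * rᴴ).trace.re := by
  have h := (hF.mul_mul_conjTranspose_same r).re_trace_nonneg
  simp only [Matrix.mul_sub, Matrix.sub_mul, Matrix.mul_one, trace_sub, Complex.sub_re] at h
  simp only [conjTranspose_mul, conjTranspose_conjTranspose, Matrix.mul_assoc] at h ⊢
  linarith

theorem IsContraction.fromBlocks_posSemidef [DecidableEq m] [DecidableEq n] {K : Matrix m n ℂ}
    (hK : K.IsContraction) (R : Matrix m k ℂ) (S : Matrix n l ℂ) :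
    (fromBlocks (Rᴴ * R) (Rᴴ * K * S) (Rᴴ * K * S)ᴴ (Sᴴ * S)).PosSemidef := by
  have hblock : (fromBlocks 1 K Kᴴ 1).PosSemidef := by
    let : Invertible (1 : Matrix m m ℂ) := invertibleOne
    rw [PosDef.one.fromBlocks₁₁, inv_one, Matrix.mul_one]
    exact hK
  convert hblock.conjTranspose_mul_mul_same (fromBlocks R 0 0 S) using 1
  simp [fromBlocks_conjTranspose, fromBlocks_multiply, Matrix.mul_assoc]

open scoped MatrixOrder

theorem PosSemidef.exists_eq_fromBlocks_gram [DecidableEq m] [DecidableEq n]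
    {P : Matrix m m ℂ} {Q : Matrix n n ℂ} {X : Matrix m n ℂ}
    (h : (fromBlocks P X Xᴴ Q).PosSemidef) :
    ∃ (B : Matrix (m ⊕ n) m ℂ) (C : Matrix (m ⊕ n) n ℂ), P = Bᴴ * B ∧ Q = Cᴴ * C ∧ X = Bᴴ * C := by
  obtain ⟨R, hR⟩ := CStarAlgebra.nonneg_iff_eq_star_mul_self.mp h.nonneg
  rw [← fromCols_toCols R, star_eq_conjTranspose, conjTranspose_fromCols_eq_fromRows_conjTranspose,
    fromRows_mul_fromCols, fromBlocks_inj] at hR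
  exact ⟨R.toCols₁, R.toCols₂, hR.1, hR.2.2.2, hR.2.1⟩

theorem re_trace_conjTranspose_mul_mul_le [DecidableEq n] {F G : Matrix k n ℂ}
    (hF : F.IsContraction) (hG : G.IsContraction) {T : Matrix n n ℂ} (hT : T.PosSemidef) :
    (Fᴴ * G * T).trace.re ≤ T.trace.re := by
  -- With `T = rᴴ r` this is `2 Re ⟪F rᴴ, G rᴴ⟫ ≤ ‖F rᴴ‖² + ‖G rᴴ‖² ≤ 2 ‖r‖²` (Frobenius).
  obtain ⟨r, rfl⟩ := CStarAlgebra.nonneg_iff_eq_star_mul_self.mp hT.nonneg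
  have hYZ : (Fᴴ * G * (star r * r)).trace = ((F * rᴴ)ᴴ * (G * rᴴ)).trace := by
    rw [star_eq_conjTranspose, ← Matrix.mul_assoc, trace_mul_comm, conjTranspose_mul,
      conjTranspose_conjTranspose]
    simp only [Matrix.mul_assoc]
  have hr : (star r * r).trace = (r * rᴴ).trace := by rw [star_eq_conjTranspose, trace_mul_comm]
  rw [hYZ, hr]
  linarith [two_mul_re_trace_conjTranspose_mul_le (F * rᴴ) (G * rᴴ), hF.re_trace_conjTranspose_mul_self_le r,
    hG.re_trace_conjTranspose_mul_self_le r]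

theorem conjTranspose_sqrt [DecidableEq n] (A : Matrix n n ℂ) : (CFC.sqrt A)ᴴ = CFC.sqrt A :=
  (CFC.sqrt_nonneg A).posSemidef.isHermitian.eq

theorem IsHermitian.exists_isContraction_mul_eq [DecidableEq n] {A : Matrix m n ℂ}
    {T : Matrix n n ℂ} (hT : T.IsHermitian) (hTA : T * T = Aᴴ * A) :
    ∃ W : Matrix m n ℂ, W.IsContraction ∧ W * T = A ∧ Wᴴ * W * T = T := by
  have hcont (f : ℝ → ℝ) : ContinuousOn f (spectrum ℝ T) := T.finite_real_spectrum.continuousOn f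
  have hmul (f g : ℝ → ℝ) : cfc f T * cfc g T = cfc (fun x => f x * g x) T :=
    (cfc_mul f g T (hcont f) (hcont g)).symm
  have hsa (f : ℝ → ℝ) : (cfc f T)ᴴ = cfc f T := (cfc_predicate (R := ℝ) f T).star_eq
  have hid : cfc id T = T := cfc_id ℝ T hT.isSelfAdjoint
  have hmulT (f : ℝ → ℝ) : cfc f T * T = cfc (fun x => f x * x) T := by
    conv_lhs => arg 2; rw [← hid]
    exact hmul f id
  have hsq : Aᴴ * A = cfc (fun x : ℝ => x * x) T := by
    rw [← hTA]
    conv_lhs => arg 1; rw [← hid]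
    exact hmulT id
  -- `cfc e T` is the projection onto the range of `T`, and `cfc (·⁻¹) T` the pseudo-inverse
  set e : ℝ → ℝ := fun x => x⁻¹ * x with he
  have hsupp : A * cfc e T = A := by
    -- `A` vanishes on `ker T` because `Aᴴ A = T²`
    have hker : (A * cfc (fun x => 1 - e x) T)ᴴ * (A * cfc (fun x => 1 - e x) T) = 0 := by
      rw [conjTranspose_mul, hsa, Matrix.mul_assoc, ← Matrix.mul_assoc Aᴴ, hsq, hmul, hmul,
        ← cfc_zero ℝ T]
      refine cfc_congr fun x _ => ?_
      by_cases hx : x = 0 <;> simp [he, hx]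
    rw [conjTranspose_mul_self_eq_zero, cfc_sub _ _ T (hcont _) (hcont _), cfc_const_one ℝ T,
      Matrix.mul_sub, Matrix.mul_one, sub_eq_zero] at hker
    exact hker.symm
  have hWW : (A * cfc (fun x : ℝ => x⁻¹) T)ᴴ * (A * cfc (fun x : ℝ => x⁻¹) T) = cfc e T := by
    rw [conjTranspose_mul, hsa, Matrix.mul_assoc, ← Matrix.mul_assoc Aᴴ, hsq, hmul, hmul]
    refine cfc_congr fun x _ => ?_
    by_cases hx : x = 0 <;> simp [he, hx]
  refine ⟨A * cfc (fun x : ℝ => x⁻¹) T, ?_, ?_, ?_⟩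
  · rw [IsContraction, hWW, ← cfc_const_one ℝ T, ← cfc_sub _ _ T (hcont _) (hcont _),
      ← nonneg_iff_posSemidef]
    exact cfc_nonneg fun x _ => by by_cases hx : x = 0 <;> simp [he, hx]
  · rw [Matrix.mul_assoc, hmulT]
    exact hsupp
  · rw [hWW, hmulT]
    conv_rhs => rw [← hid]
    refine cfc_congr fun x _ => ?_
    by_cases hx : x = 0 <;> simp [he, hx]

theorem exists_isContraction_mul_sqrt [DecidableEq n] (A : Matrix m n ℂ) :
    ∃ W : Matrix m n ℂ, W.IsContraction ∧ W * CFC.sqrt (Aᴴ * A) = A ∧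
      Wᴴ * W * CFC.sqrt (Aᴴ * A) = CFC.sqrt (Aᴴ * A) :=
  IsHermitian.exists_isContraction_mul_eq (conjTranspose_sqrt _)
    (CFC.sqrt_mul_sqrt_self _ (posSemidef_conjTranspose_mul_self A).nonneg)

theorem re_trace_conjTranspose_mul_mul_le_traceNorm [DecidableEq m] [DecidableEq n]
    {F : Matrix k n ℂ} {G : Matrix k m ℂ} (hF : F.IsContraction) (hG : G.IsContraction)
    (A : Matrix m n ℂ) : (Fᴴ * G * A).trace.re ≤ traceNorm A := by
  obtain ⟨W, hW, hWA, -⟩ := exists_isContraction_mul_sqrt A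
  conv_lhs => rw [← hWA, ← Matrix.mul_assoc, Matrix.mul_assoc Fᴴ]
  exact re_trace_conjTranspose_mul_mul_le hF (hG.mul hW)
    (CFC.sqrt_nonneg _).posSemidef

theorem exists_isContraction_re_trace_mul_conjTranspose_eq_traceNorm [DecidableEq m] [DecidableEq n]
    (A : Matrix m n ℂ) : ∃ W : Matrix m n ℂ, W.IsContraction ∧ (W * Aᴴ).trace.re = traceNorm A := by
  obtain ⟨W, hW, hWA, hWWT⟩ := exists_isContraction_mul_sqrt A
  refine ⟨W, hW, ?_⟩
  set T := CFC.sqrt (Aᴴ * A)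
  calc (W * Aᴴ).trace.re = (W * T * Wᴴ).trace.re := by
        rw [← hWA, conjTranspose_mul, conjTranspose_sqrt, Matrix.mul_assoc]
    _ = (Wᴴ * W * T).trace.re := by rw [trace_mul_comm, Matrix.mul_assoc]
    _ = traceNorm A := by rw [hWWT]; rfl

theorem re_trace_le_traceNorm_sqrt_mul_sqrt [DecidableEq n] {P Q X : Matrix n n ℂ}
    (h : (fromBlocks P X Xᴴ Q).PosSemidef) :
    X.trace.re ≤ traceNorm (CFC.sqrt P * CFC.sqrt Q) := by
  obtain ⟨B, C, rfl, rfl, rfl⟩ := h.exists_eq_fromBlocks_gram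
  obtain ⟨U, hU, hUB, -⟩ := exists_isContraction_mul_sqrt B
  obtain ⟨V, hV, hVC, -⟩ := exists_isContraction_mul_sqrt C
  calc (Bᴴ * C).trace.re = (Cᴴ * B).trace.re := by
        rw [← conjTranspose_conjTranspose B, ← conjTranspose_mul, trace_conjTranspose,
          conjTranspose_conjTranspose, Complex.star_def, Complex.conj_re]
    _ = (Vᴴ * U * (CFC.sqrt (Bᴴ * B) * CFC.sqrt (Cᴴ * C))).trace.re := by
        conv_lhs => rw [← hUB, ← hVC]
        rw [conjTranspose_mul, conjTranspose_sqrt, Matrix.mul_assoc, trace_mul_comm]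
        simp only [Matrix.mul_assoc]
    _ ≤ traceNorm (CFC.sqrt (Bᴴ * B) * CFC.sqrt (Cᴴ * C)) :=
        re_trace_conjTranspose_mul_mul_le_traceNorm hV hU _

theorem exists_fromBlocks_posSemidef_re_trace_eq_traceNorm [DecidableEq n] {P Q : Matrix n n ℂ}
    (hP : P.PosSemidef) (hQ : Q.PosSemidef) :
    ∃ X : Matrix n n ℂ, (fromBlocks P X Xᴴ Q).PosSemidef ∧
      X.trace.re = traceNorm (CFC.sqrt P * CFC.sqrt Q) := by
  obtain ⟨W, hW, htr⟩ :=
    exists_isContraction_re_trace_mul_conjTranspose_eq_traceNorm (CFC.sqrt P * CFC.sqrt Q)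
  refine ⟨CFC.sqrt P * W * CFC.sqrt Q, ?_, ?_⟩
  · simpa only [conjTranspose_sqrt, CFC.sqrt_mul_sqrt_self P hP.nonneg,
      CFC.sqrt_mul_sqrt_self Q hQ.nonneg] using hW.fromBlocks_posSemidef (CFC.sqrt P) (CFC.sqrt Q)
  · rw [← htr, conjTranspose_mul, conjTranspose_sqrt, conjTranspose_sqrt, Matrix.mul_assoc,
      trace_mul_comm, Matrix.mul_assoc]

theorem re_trace_div_two_add_trace_conjTranspose_div_two (X : Matrix n n ℂ) :
    (X.trace / 2 + Xᴴ.trace / 2).re = X.trace.re := by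
  simp [trace_conjTranspose]

end Matrix

open scoped MatrixOrder in
theorem fid_eq_traceNorm_sqrt_mul_sqrt {n : Type*} [Fintype n] [DecidableEq n]
    {P Q : Matrix n n ℂ} (hP : P.PosSemidef) (hQ : Q.PosSemidef) :
    fid P Q = traceNorm (CFC.sqrt P * CFC.sqrt Q) := by
  rw [fid, msqrt, msqrt, dif_pos hP, dif_pos hQ]

/-- SDP primal characterization of fidelity. -/
theorem stmt1 {n : ℕ} (P Q : Matrix (Fin n) (Fin n) ℂ)
    (hP : P.PosSemidef) (hQ : Q.PosSemidef) :
    fid P Q = sSup {c : ℝ | ∃ X : Matrix (Fin n) (Fin n) ℂ,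
      (Matrix.fromBlocks P X Xᴴ Q).PosSemidef ∧
      c = (X.trace / 2 + Xᴴ.trace / 2).re} := by
  rw [fid_eq_traceNorm_sqrt_mul_sqrt hP hQ]
  refine (IsGreatest.csSup_eq ⟨?_, ?_⟩).symm
  · obtain ⟨X, hX, htr⟩ := exists_fromBlocks_posSemidef_re_trace_eq_traceNorm hP hQ
    exact ⟨X, hX, by rw [re_trace_div_two_add_trace_conjTranspose_div_two, htr]⟩
  · rintro c ⟨X, hX, rfl⟩
    rw [re_trace_div_two_add_trace_conjTranspose_div_two]
    exact re_trace_le_traceNorm_sqrt_mul_sqrt hX
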